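/- Let x : M → ℝ^{n+1} be an isometric immersion of a hypersurface with unit normal N, shape operator S, first mean curvature s₁ = tr S and second mean curvature s₂. If Δ²x = λ Δx for a constant λ, then S(∇s₁) = -(s₁/2)∇s₁ and Δs₁ = -s₁(s₁² - 2s₂ - λ). -/
import Mathlib


open scoped RealInnerProductSpace

/-- If `Δx = s₁ • N` (Beltrami) and `Δ²x = (Δs₁ + s₁(s₁²-2s₂)) • N + (S(∇s₁) + (s₁/2) • ∇s₁)`,
then `Δ²x = λ Δx` forces `S(∇s₁) = -(s₁/2) • ∇s₁` and `Δs₁ = -s₁(s₁² - 2s₂ - λ)`.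
Here `b = S(∇s₁)`, `g = ∇s₁` are tangential (orthogonal to the unit normal `N`) and
`a = Δs₁`. -/
theorem stmt_0 {n : ℕ} (N b g : EuclideanSpace ℝ (Fin (n + 1)))
    (s₁ s₂ a lam : ℝ)
    (hN : ‖N‖ = 1)
    (hb : ⟪b, N⟫ = 0) (hg : ⟪g, N⟫ = 0)
    (hbih : (a + s₁ * (s₁ ^ 2 - 2 * s₂)) • N + (b + (s₁ / 2) • g)
      = lam • (s₁ • N)) :
    b = -(s₁ / 2) • g ∧ a = -s₁ * (s₁ ^ 2 - 2 * s₂ - lam) := by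
  have hNN : ⟪N, N⟫ = 1 := by
    rw [real_inner_self_eq_norm_sq, hN]; norm_num
  have hinner := congrArg (fun v => ⟪v, N⟫) hbih
  simp only [inner_add_left, inner_smul_left, RCLike.ofReal_real_eq_id, id, hNN, hb, hg,
    conj_trivial] at hinner
  have ha : a = -s₁ * (s₁ ^ 2 - 2 * s₂ - lam) := by nlinarith [hinner]
  refine ⟨?_, ha⟩
  have h2 : b + (s₁ / 2) • g = 0 := by
    have : (a + s₁ * (s₁ ^ 2 - 2 * s₂)) • N = lam • (s₁ • N) := by
      rw [smul_smul]
      congr 1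
      nlinarith [hinner]
    have h3 := hbih
    rw [this] at h3
    exact add_eq_left.mp h3
  have := eq_neg_of_add_eq_zero_left h2
  rw [this, neg_smul]
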